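/- Let A be an m×m real matrix, W an m×d real matrix, b ∈ ℝ^m, and define the network coherency regularization l_c(L) = ‖W − A W‖ + ‖b − A b‖, where the matrix norm is the ℓ²→ℓ² operator norm and vector norms are Euclidean. Let z be a random vector in ℝ^d whose coordinates are independent standard Gaussian random variables (mean 0, variance 1), modeling the batch-normalized output of the second-to-last layer, and let ŷ = W z + b. Then for every δ ≥ 1, with d ≥ 1, P( c(ŷ) ≤ δ · l_c(L) ) ≥ 1 − 4 · exp(−δ² / (8 d²)), where c(ŷ) = ‖ŷ − A ŷ‖. -/

import Mathlib

/-!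
On the event that every coordinate of `z` is at most `s = √(δ² / d)` in absolute value we have
`‖z‖ ≤ δ`, and then `ŷ - A ŷ = (W - A W) z + (b - A b)` has norm at most `δ · l_c(L)` because
`δ ≥ 1`. Each standard Gaussian coordinate is `1`-sub-Gaussian, so the union bound over the `d`
coordinates controls the complementary event by `2 d exp(-δ² / (2 d))`. Writing
`u = δ² / (8 d²)`, this is `2 d exp(-4 d u) ≤ 2 exp(-u)` as soon as `u ≥ 1/4`, which holds
whenever the claimed bound `1 - 4 exp(-u)` is not vacuous.
-/

open MeasureTheory ProbabilityTheory
open scoped Matrix Matrix.Norms.L2Operator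
open Real
open scoped NNReal

lemma norm_affine_sub_mulVec_le {m n : Type*} [Fintype m] [Fintype n] [DecidableEq n]
    (A : Matrix m m ℝ) (W : Matrix m n ℝ) (b : EuclideanSpace ℝ m) (z : EuclideanSpace ℝ n) :
    ‖((EuclideanSpace.equiv m ℝ).symm (W *ᵥ z) + b) -
        (EuclideanSpace.equiv m ℝ).symm (A *ᵥ ((EuclideanSpace.equiv m ℝ).symm (W *ᵥ z) + b))‖ ≤
      ‖W - A * W‖ * ‖z‖ + ‖b - (EuclideanSpace.equiv m ℝ).symm (A *ᵥ b)‖ := by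
  set e := (EuclideanSpace.equiv m ℝ).symm
  have hsplit : e (W *ᵥ z) + b - e (A *ᵥ (e (W *ᵥ z) + b))
      = e ((W - A * W) *ᵥ z) + (b - e (A *ᵥ b)) := by
    ext i
    simp [e, Matrix.sub_mulVec, Matrix.mulVec_add, ← Matrix.mulVec_mulVec]
    ring
  rw [hsplit]
  exact (norm_add_le _ _).trans (by gcongr; exact Matrix.l2_opNorm_mulVec _ _)

lemma norm_affine_sub_mulVec_le_mul_of_norm_le {m n : Type*} [Fintype m] [Fintype n]
    [DecidableEq n] (A : Matrix m m ℝ) (W : Matrix m n ℝ) (b : EuclideanSpace ℝ m)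
    {z : EuclideanSpace ℝ n} {δ : ℝ} (hδ : 1 ≤ δ) (hz : ‖z‖ ≤ δ) :
    ‖((EuclideanSpace.equiv m ℝ).symm (W *ᵥ z) + b) -
        (EuclideanSpace.equiv m ℝ).symm (A *ᵥ ((EuclideanSpace.equiv m ℝ).symm (W *ᵥ z) + b))‖ ≤
      δ * (‖W - A * W‖ + ‖b - (EuclideanSpace.equiv m ℝ).symm (A *ᵥ b)‖) :=
  calc _ ≤ ‖W - A * W‖ * ‖z‖ + ‖b - (EuclideanSpace.equiv m ℝ).symm (A *ᵥ b)‖ :=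
        norm_affine_sub_mulVec_le A W b z
    _ ≤ ‖W - A * W‖ * δ + δ * ‖b - (EuclideanSpace.equiv m ℝ).symm (A *ᵥ b)‖ := by
        gcongr
        exact le_mul_of_one_le_left (norm_nonneg _) hδ
    _ = _ := by ring

lemma EuclideanSpace.norm_sq_le_card_mul_sq {ι : Type*} [Fintype ι] {x : EuclideanSpace ℝ ι}
    {s : ℝ} (h : ∀ i, |x i| ≤ s) : ‖x‖ ^ 2 ≤ Fintype.card ι * s ^ 2 := by
  rw [EuclideanSpace.norm_sq_eq]
  calc ∑ i, ‖x i‖ ^ 2 ≤ ∑ _i : ι, s ^ 2 := by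
        gcongr with i
        exact (Real.norm_eq_abs _).trans_le (h i)
    _ = Fintype.card ι * s ^ 2 := by simp

lemma MeasureTheory.one_sub_measure_le_measure_compl {Ω : Type*} [MeasurableSpace Ω]
    (μ : Measure Ω) [IsProbabilityMeasure μ] (s : Set Ω) : 1 - μ s ≤ μ sᶜ := by
  rw [tsub_le_iff_left, ← measure_univ (μ := μ)]
  exact measure_univ_le_add_compl s

namespace ProbabilityTheory

variable {Ω : Type*} [MeasurableSpace Ω] {μ : Measure Ω}

lemma hasSubgaussianMGF_id_gaussianReal (v : ℝ≥0) :
    HasSubgaussianMGF id v (gaussianReal 0 v) where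
  integrable_exp_mul := integrable_exp_mul_gaussianReal
  mgf_le t := by simp [mgf_id_gaussianReal]

lemma hasSubgaussianMGF_of_map_eq_gaussianReal {X : Ω → ℝ} {v : ℝ≥0}
    (h : μ.map X = gaussianReal 0 v) : HasSubgaussianMGF X v μ := by
  have hX : AEMeasurable X μ := aemeasurable_of_map_neZero (by rw [h]; infer_instance)
  rw [← HasSubgaussianMGF.id_map_iff hX, h]
  exact hasSubgaussianMGF_id_gaussianReal v

lemma HasSubgaussianMGF.measureReal_abs_ge_le [IsFiniteMeasure μ] {X : Ω → ℝ} {c : ℝ≥0}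
    (h : HasSubgaussianMGF X c μ) {ε : ℝ} (hε : 0 ≤ ε) :
    μ.real {ω | ε ≤ |X ω|} ≤ 2 * exp (-ε ^ 2 / (2 * c)) := by
  have hsub : {ω | ε ≤ |X ω|} ⊆ {ω | ε ≤ X ω} ∪ {ω | ε ≤ (-X) ω} := by
    intro ω hω
    simpa [le_abs] using hω
  calc μ.real {ω | ε ≤ |X ω|} ≤ μ.real {ω | ε ≤ X ω} + μ.real {ω | ε ≤ (-X) ω} :=
        (measureReal_mono hsub).trans (measureReal_union_le _ _)
    _ ≤ exp (-ε ^ 2 / (2 * c)) + exp (-ε ^ 2 / (2 * c)) :=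
        add_le_add (h.measure_ge_le hε) (h.neg.measure_ge_le hε)
    _ = 2 * exp (-ε ^ 2 / (2 * c)) := by ring

lemma measureReal_exists_abs_ge_le [IsFiniteMeasure μ] {ι : Type*} [Fintype ι]
    {X : ι → Ω → ℝ} {c : ℝ≥0} (h : ∀ i, HasSubgaussianMGF (X i) c μ) {ε : ℝ} (hε : 0 ≤ ε) :
    μ.real {ω | ∃ i, ε ≤ |X i ω|} ≤ Fintype.card ι * (2 * exp (-ε ^ 2 / (2 * c))) := by
  rw [Set.ofPred_exists]
  calc μ.real (⋃ i, {ω | ε ≤ |X i ω|}) ≤ ∑ i, μ.real {ω | ε ≤ |X i ω|} :=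
        measureReal_iUnion_fintype_le _
    _ ≤ ∑ _i : ι, 2 * exp (-ε ^ 2 / (2 * c)) := by
        gcongr with i
        exact (h i).measureReal_abs_ge_le hε
    _ = _ := by simp

end ProbabilityTheory

lemma natCast_mul_exp_neg_le {d : ℕ} (hd : 1 ≤ d) {u : ℝ} (hu : 1 / 4 ≤ u) :
    d * exp (-(4 * d * u)) ≤ exp (-u) := by
  have hd' : (1 : ℝ) ≤ d := by exact_mod_cast hd
  have hlin : (d : ℝ) ≤ exp ((4 * d - 1) * u) := by
    nlinarith [add_one_le_exp ((4 * d - 1) * u)]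
  calc d * exp (-(4 * d * u)) ≤ exp ((4 * d - 1) * u) * exp (-(4 * d * u)) := by gcongr
    _ = exp (-u) := by rw [← exp_add]; ring_nf

theorem coherency_prob_bound_general {Ω : Type*} [MeasurableSpace Ω]
    (μ : Measure Ω) [IsProbabilityMeasure μ] {m d : ℕ} (hd : 1 ≤ d)
    (A : Matrix (Fin m) (Fin m) ℝ) (W : Matrix (Fin m) (Fin d) ℝ)
    (b : EuclideanSpace ℝ (Fin m))
    (z : Ω → EuclideanSpace ℝ (Fin d))
    (hgauss : ∀ i, μ.map (fun ω => z ω i) = gaussianReal 0 1)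
    (δ : ℝ) (hδ : 1 ≤ δ) :
    1 - ENNReal.ofReal (4 * Real.exp (-δ ^ 2 / (8 * d ^ 2))) ≤
      μ {ω |
        ‖((EuclideanSpace.equiv (Fin m) ℝ).symm (W *ᵥ z ω) + b) -
            (EuclideanSpace.equiv (Fin m) ℝ).symm
              (A *ᵥ ((EuclideanSpace.equiv (Fin m) ℝ).symm (W *ᵥ z ω) + b))‖ ≤
          δ * (‖W - A * W‖ + ‖b - (EuclideanSpace.equiv (Fin m) ℝ).symm (A *ᵥ b)‖)} := by
  rw [neg_div]
  set u := δ ^ 2 / (8 * d ^ 2) with hu_def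
  rcases le_or_gt 1 (4 * exp (-u)) with htrivial | hlt
  · rw [tsub_eq_zero_of_le (ENNReal.one_le_ofReal.2 htrivial)]
    exact zero_le
  have hu : 1 / 4 ≤ u := by linarith [add_one_le_exp (-u)]
  have hd0 : (0 : ℝ) < d := by exact_mod_cast hd
  set s := √(δ ^ 2 / d)
  have hs : s ^ 2 = δ ^ 2 / d := sq_sqrt (by positivity)
  set bad := {ω | ∃ i, s ≤ |z ω i|}
  have hbad : μ.real bad ≤ 4 * exp (-u) :=
    calc μ.real bad ≤ d * (2 * exp (-s ^ 2 / 2)) := by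
          simpa using measureReal_exists_abs_ge_le
            (fun i => hasSubgaussianMGF_of_map_eq_gaussianReal (hgauss i)) (sqrt_nonneg _)
      _ = 2 * (d * exp (-(4 * d * u))) := by
          rw [show s ^ 2 = 8 * d * u by rw [hs, hu_def]; field_simp]
          ring_nf
      _ ≤ 4 * exp (-u) := by linarith [natCast_mul_exp_neg_le hd hu, exp_pos (-u)]
  calc 1 - ENNReal.ofReal (4 * exp (-u)) ≤ 1 - μ bad := by
        gcongr
        rw [← ofReal_measureReal]
        exact ENNReal.ofReal_le_ofReal hbad
    _ ≤ μ badᶜ := one_sub_measure_le_measure_compl μ bad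
    _ ≤ _ := measure_mono fun ω hω => ?_
  have hz : ‖z ω‖ ≤ δ := by
    simp only [bad, Set.mem_compl_iff, Set.mem_ofPred_eq, not_exists, not_le] at hω
    have hsq := EuclideanSpace.norm_sq_le_card_mul_sq fun i => (hω i).le
    rw [Fintype.card_fin, hs, mul_div_cancel₀ _ hd0.ne'] at hsq
    exact abs_le_of_sq_le_sq' hsq (by linarith) |>.2
  exact norm_affine_sub_mulVec_le_mul_of_norm_le A W b hδ hz

/-- Proposition 1: if the batch-normalized second-to-last layer output `z` is a random
vector in `ℝ^d` with independent standard Gaussian coordinates and the network outputs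
`ŷ = W z + b`, then for every `δ ≥ 1` (with `d ≥ 1`), the coherency
`c(ŷ) = ‖ŷ - A ŷ‖` satisfies `c(ŷ) ≤ δ · l_c(L)` with probability at least
`1 - 4 exp(-δ² / (8 d²))`, where `l_c(L) = ‖W - A W‖ + ‖b - A b‖`. -/
theorem coherency_prob_bound {Ω : Type*} [MeasurableSpace Ω]
    (μ : Measure Ω) [IsProbabilityMeasure μ] {m d : ℕ} (hd : 1 ≤ d)
    (A : Matrix (Fin m) (Fin m) ℝ) (W : Matrix (Fin m) (Fin d) ℝ)
    (b : EuclideanSpace ℝ (Fin m))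
    (z : Ω → EuclideanSpace ℝ (Fin d))
    (hmeas : ∀ i, Measurable fun ω => z ω i)
    (hindep : iIndepFun (fun i ω => z ω i) μ)
    (hgauss : ∀ i, μ.map (fun ω => z ω i) = gaussianReal 0 1)
    (δ : ℝ) (hδ : 1 ≤ δ) :
    1 - ENNReal.ofReal (4 * Real.exp (-δ ^ 2 / (8 * d ^ 2))) ≤
      μ {ω |
        ‖((EuclideanSpace.equiv (Fin m) ℝ).symm (W *ᵥ z ω) + b) -
            (EuclideanSpace.equiv (Fin m) ℝ).symm
              (A *ᵥ ((EuclideanSpace.equiv (Fin m) ℝ).symm (W *ᵥ z ω) + b))‖ ≤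
          δ * (‖W - A * W‖ + ‖b - (EuclideanSpace.equiv (Fin m) ℝ).symm (A *ᵥ b)‖)} :=
  coherency_prob_bound_general μ hd A W b z hgauss δ hδ
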